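/- arXiv:0709.2797 — 6 statements merged into one kernel-verified Lean document; each statement's English description precedes it below -/
import Mathlib

section
/- If an element β of R − k is integral over k, then its orbit under Aut_k(R) is finite (being contained in the set of roots of its minimal polynomial over k); consequently if k is infinite and some α ∈ R − k is integral over k, then (R − k)/Aut_k(R) is infinite. -/
/-!
Every `k`-algebra map sends an integral `β` to a root of its minimal polynomial, so the
`Aut_k(R)`-orbit of `β` is finite; since automorphisms preserve integrality, each orbit meets
the integral elements in a finite set. On the other hand the translates `α + c`, `c ∈ k`, of an
integral `α ∉ k` form infinitely many integral elements outside `k`, which finitely many orbits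
cannot cover.
-/

open Polynomial

section

variable {k R : Type*} [Field k] [CommRing R] [Algebra k R]

theorem finite_range_algHom_apply_of_isIntegral {S : Type*} [CommRing S] [IsDomain S]
    [Algebra k S] {β : R} (hβ : IsIntegral k β) :
    (Set.range fun f : R →ₐ[k] S => f β).Finite := by
  refine ((minpoly k β).rootSet_finite S).subset ?_
  rintro _ ⟨f, rfl⟩
  rw [mem_rootSet]
  exact ⟨minpoly.ne_zero hβ, by rw [aeval_algHom_apply, minpoly.aeval, map_zero]⟩

theorem finite_range_algEquiv_apply_of_isIntegral [IsDomain R] {β : R} (hβ : IsIntegral k β) :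
    (Set.range fun σ : R ≃ₐ[k] R => σ β).Finite :=
  (finite_range_algHom_apply_of_isIntegral hβ).subset <| by
    rintro _ ⟨σ, rfl⟩
    exact ⟨σ, rfl⟩

theorem finite_range_algEquiv_apply_inter_setOf_isIntegral [IsDomain R] (y : R) :
    ((Set.range fun σ : R ≃ₐ[k] R => σ y) ∩ {x | IsIntegral k x}).Finite := by
  by_cases hy : IsIntegral k y
  · exact (finite_range_algEquiv_apply_of_isIntegral hy).inter_of_left _
  · convert Set.finite_empty
    refine Set.eq_empty_of_forall_notMem ?_
    rintro _ ⟨⟨σ, rfl⟩, hσy⟩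
    exact hy ((isIntegral_algEquiv σ).mp hσy)

theorem infinite_setOf_notMem_range_and_isIntegral [Nontrivial R] [Infinite k] {α : R}
    (hα : α ∉ Set.range (algebraMap k R)) (hαi : IsIntegral k α) :
    {x : R | x ∉ Set.range (algebraMap k R) ∧ IsIntegral k x}.Infinite := by
  have htranslates : (Set.range fun c : k => α + algebraMap k R c).Infinite :=
    Set.infinite_range_of_injective fun a b hab =>
      (algebraMap k R).injective (add_left_cancel hab)
  refine htranslates.mono ?_
  rintro _ ⟨c, rfl⟩
  refine ⟨?_, hαi.add isIntegral_algebraMap⟩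
  rintro ⟨d, hd⟩
  exact hα ⟨d - c, by rw [map_sub, hd, add_sub_cancel_right]⟩

end

theorem finite_orbit_of_integral_and_infinite_orbit_space_general
    (k R : Type*) [Field k] [Infinite k] [CommRing R] [IsDomain R] [Algebra k R] :
    (∀ β : R, β ∉ Set.range (algebraMap k R) → IsIntegral k β →
      (Set.range fun σ : R ≃ₐ[k] R => σ β).Finite) ∧
    ((∃ α : R, α ∉ Set.range (algebraMap k R) ∧ IsIntegral k α) →
      ¬ ∃ s : Finset R, ∀ x : R, x ∉ Set.range (algebraMap k R) →
        ∃ y ∈ s, ∃ σ : R ≃ₐ[k] R, σ y = x) := by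
  refine ⟨fun β _ hβ => finite_range_algEquiv_apply_of_isIntegral hβ, ?_⟩
  rintro ⟨α, hα, hαi⟩ ⟨s, hs⟩
  refine infinite_setOf_notMem_range_and_isIntegral hα hαi <|
    (s.finite_toSet.biUnion fun y _ =>
      finite_range_algEquiv_apply_inter_setOf_isIntegral (k := k) y).subset ?_
  rintro x ⟨hx, hxi⟩
  obtain ⟨y, hy, σ, rfl⟩ := hs x hx
  exact Set.mem_biUnion hy ⟨⟨σ, rfl⟩, hxi⟩

theorem finite_orbit_of_integral_and_infinite_orbit_space
    (k R : Type*) [Field k] [Infinite k] [CommRing R] [IsDomain R] [Algebra k R]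
    (hinj : Function.Injective (algebraMap k R)) :
    (∀ β : R, β ∉ Set.range (algebraMap k R) → IsIntegral k β →
      (Set.range fun σ : R ≃ₐ[k] R => σ β).Finite) ∧
    ((∃ α : R, α ∉ Set.range (algebraMap k R) ∧ IsIntegral k α) →
      ¬ ∃ s : Finset R, ∀ x : R, x ∉ Set.range (algebraMap k R) →
        ∃ y ∈ s, ∃ σ : R ≃ₐ[k] R, σ y = x) :=
  finite_orbit_of_integral_and_infinite_orbit_space_general k R
end

section
/- In characteristic p > 0, the descending chain (R − k) ⊇ (R − k)^p ⊇ (R − k)^{p^2} ⊇ ... of Aut_k(R)-stable subsets stabilizes; i.e., there exists n ≥ 1 with (R − k)^{p^n} = (R − k)^{p^{n+1}}. -/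
theorem power_chain_stabilizes_of_finite_orbit_space
    (k R : Type*) [Field k] [CommRing R] [IsDomain R] [IsNoetherianRing R]
    [Infinite R] [Algebra k R] (p : ℕ) [hp : Fact p.Prime] [CharP k p]
    (hinj : Function.Injective (algebraMap k R))
    (hic : ∀ x : R, IsIntegral k x → x ∈ Set.range (algebraMap k R))
    (horb : ∃ s : Finset R, ∀ x : R, x ∉ Set.range (algebraMap k R) →
      ∃ y ∈ s, ∃ σ : R ≃ₐ[k] R, σ y = x) :
    ∃ n : ℕ, 1 ≤ n ∧
      (fun x : R => x ^ p ^ n) '' {x : R | x ∉ Set.range (algebraMap k R)} =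
      (fun x : R => x ^ p ^ (n + 1)) '' {x : R | x ∉ Set.range (algebraMap k R)} := by
  classical
  obtain ⟨s, hs⟩ := horb
  set S : Set R := {x : R | x ∉ Set.range (algebraMap k R)} with hS
  set T : ℕ → Set R := fun n => (fun x : R => x ^ p ^ n) '' S with hT
  -- if x ∉ k then x^p ∉ k (k integrally closed)
  have hpow : ∀ x : R, x ∈ S → x ^ p ∈ S := by
    intro x hx hc
    obtain ⟨c, hc⟩ := hc
    apply hx
    apply hic
    refine ⟨Polynomial.X ^ p - Polynomial.C c,
      Polynomial.monic_X_pow_sub_C c hp.out.ne_zero, ?_⟩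
    simp [Polynomial.eval₂_sub, hc.symm]
  have hpown : ∀ n (x : R), x ∈ S → x ^ p ^ n ∈ S := by
    intro n
    induction n with
    | zero => intro x hx; simpa using hx
    | succ m ih =>
      intro x hx
      have : x ^ p ^ (m + 1) = (x ^ p ^ m) ^ p := by
        rw [← pow_mul, pow_succ]
      rw [this]
      exact hpow _ (ih x hx)
  -- S is stable under automorphisms
  have hσS : ∀ (σ : R ≃ₐ[k] R) (x : R), x ∈ S → σ x ∈ S := by
    intro σ x hx hc
    obtain ⟨c, hc⟩ := hc
    apply hx
    refine ⟨c, ?_⟩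
    have h2 : algebraMap k R c = x := by
      simpa [AlgEquiv.commutes] using congrArg σ.symm hc
    exact h2
  -- T n stable under automorphisms
  have hσT : ∀ n (σ : R ≃ₐ[k] R) (x : R), x ∈ T n → σ x ∈ T n := by
    rintro n σ x ⟨z, hz, rfl⟩
    exact ⟨σ z, hσS σ z hz, by simp [map_pow]⟩
  have hTsub : ∀ n, T (n + 1) ⊆ T n := by
    rintro n x ⟨z, hz, rfl⟩
    refine ⟨z ^ p, hpow z hz, ?_⟩
    show (z ^ p) ^ p ^ n = z ^ p ^ (n + 1)
    rw [← pow_mul, ← pow_succ']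
  have hTS : ∀ n, T n ⊆ S := by
    rintro n x ⟨z, hz, rfl⟩
    exact hpown n z hz
  -- the finite invariant
  set f : ℕ → Finset R := fun n => s.filter (fun y => ∃ σ : R ≃ₐ[k] R, σ y ∈ T n)
    with hf
  have hfsub : ∀ n, f (n + 1) ⊆ f n := by
    intro n
    show s.filter _ ⊆ s.filter _
    apply Finset.monotone_filter_right
    rintro y - ⟨σ, hσ⟩
    exact ⟨σ, hTsub n hσ⟩
    
  -- f n = f (n+1) implies T n = T (n+1)
  have key : ∀ n, f n = f (n + 1) → T n = T (n + 1) := by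
    intro n hfn
    refine Set.Subset.antisymm ?_ (hTsub n)
    intro x hx
    obtain ⟨y, hys, σ, hσy⟩ := hs x (hTS n hx)
    have hyf : y ∈ f n := by
      rw [hf]
      simp only [Finset.mem_filter]
      exact ⟨hys, σ, by rwa [hσy]⟩
    rw [hfn, hf] at hyf
    simp only [Finset.mem_filter] at hyf
    obtain ⟨-, τ, hτ⟩ := hyf
    have := hσT (n + 1) (τ.symm.trans σ) (τ y) hτ
    simpa [hσy] using this
  -- card argument: find n ≥ 1 with f n = f (n+1)
  by_contra hcon
  push_neg at hcon
  have hne : ∀ n, 1 ≤ n → f n ≠ f (n + 1) := by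
    intro n hn h
    exact hcon n hn (key n h)
  have hlt : ∀ n, 1 ≤ n → (f (n + 1)).card < (f n).card := by
    intro n hn
    refine lt_of_le_of_ne (Finset.card_le_card (hfsub n)) ?_
    intro h
    exact hne n hn ((Finset.eq_of_subset_of_card_le (hfsub n) h.ge).symm)
  have hdesc : ∀ m, (f (m + 1)).card + m ≤ (f 1).card := by
    intro m
    induction m with
    | zero => simp
    | succ j ih =>
      have h1 : (f (j + 1 + 1)).card < (f (j + 1)).card := hlt (j + 1) (by omega)
      omega
  have := hdesc ((f 1).card + 1)
  omega
end

section
/- Let U be the group of units of R. If U ∩ (R − k) is nonempty and (R − k)^l = R − k for an integer l ≥ 1, then U = U^l, k = k^l, and R = R^l. -/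
/-!
Put `K := range (algebraMap k R)`. Every element outside `K` is an `l`-th power. For `a ∈ kˣ` pick
the unit `u ∉ K`; then `u ^ l ∉ K`, hence `a • u ^ l ∉ K` is some `y ^ l`, and `(y * u⁻¹) ^ l = a`.
So `y * u⁻¹` is integral over `k`, hence lies in `k`: `k = k ^ l`. Now `R = R ^ l` follows from
`K = K ^ l`, and a root of a unit is a unit.
-/

theorem Units.exists_pow_eq_of_pow_eq {M : Type*} [Monoid M] {l : ℕ} (hl : l ≠ 0) {w : Mˣ}
    {y : M} (hy : y ^ l = w) : ∃ v : Mˣ, v ^ l = w := by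
  have hunit : IsUnit y := (isUnit_pow_iff hl).1 (hy ▸ w.isUnit)
  exact ⟨hunit.unit, Units.ext (by simp [hy])⟩

section

variable {k R : Type*}

theorem algebraMap_mul_mem_range_iff [Field k] [Semiring R] [Algebra k R] {a : k} (ha : a ≠ 0)
    {x : R} :
    algebraMap k R a * x ∈ Set.range (algebraMap k R) ↔ x ∈ Set.range (algebraMap k R) := by
  simp only [← Algebra.mem_bot]
  refine ⟨fun h => ?_, Subalgebra.mul_mem _ (Subalgebra.algebraMap_mem _ a)⟩
  have hx : x = algebraMap k R a⁻¹ * (algebraMap k R a * x) := by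
    rw [← mul_assoc, ← map_mul, inv_mul_cancel₀ ha, map_one, one_mul]
  exact hx ▸ Subalgebra.mul_mem _ (Subalgebra.algebraMap_mem _ _) h

theorem exists_pow_eq_of_pow_eq_algebraMap [CommRing k] [Ring R] [Algebra k R]
    (hinj : Function.Injective (algebraMap k R))
    (hic : ∀ x : R, IsIntegral k x → x ∈ Set.range (algebraMap k R)) {l : ℕ} (hl : 0 < l)
    {a : k} {z : R} (hz : z ^ l = algebraMap k R a) : ∃ b : k, b ^ l = a := by
  have hint : IsIntegral k z := IsIntegral.of_pow hl (hz ▸ isIntegral_algebraMap)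
  obtain ⟨b, hb⟩ := hic z hint
  exact ⟨b, hinj (by rw [map_pow, hb, hz])⟩

variable [Field k] [CommRing R] [Algebra k R]

theorem exists_pow_eq_of_unit_pow_not_mem_range (hinj : Function.Injective (algebraMap k R))
    (hic : ∀ x : R, IsIntegral k x → x ∈ Set.range (algebraMap k R)) {l : ℕ} (hl : 0 < l)
    {u : Rˣ} (hu : (u : R) ^ l ∉ Set.range (algebraMap k R))
    (hroot : ∀ x : R, x ∉ Set.range (algebraMap k R) → ∃ y : R, y ^ l = x) (a : k) :
    ∃ b : k, b ^ l = a := by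
  rcases eq_or_ne a 0 with rfl | ha
  · exact ⟨0, zero_pow hl.ne'⟩
  obtain ⟨y, hy⟩ := hroot _ (mt (algebraMap_mul_mem_range_iff ha).1 hu)
  refine exists_pow_eq_of_pow_eq_algebraMap hinj hic hl (z := y * ↑u⁻¹) ?_
  rw [mul_pow, hy, mul_assoc, ← mul_pow, Units.mul_inv, one_pow, mul_one]

theorem exists_pow_eq_of_forall_not_mem_range {l : ℕ} (hk : ∀ a : k, ∃ b : k, b ^ l = a)
    (hroot : ∀ x : R, x ∉ Set.range (algebraMap k R) → ∃ y : R, y ^ l = x) (x : R) :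
    ∃ y : R, y ^ l = x := by
  by_cases hx : x ∈ Set.range (algebraMap k R)
  · obtain ⟨a, rfl⟩ := hx
    obtain ⟨b, rfl⟩ := hk a
    exact ⟨algebraMap k R b, (map_pow _ _ _).symm⟩
  · exact hroot x hx

end

theorem powers_surjective_of_unit_outside_base_general
    (k R : Type*) [Field k] [CommRing R] [Algebra k R]
    (hinj : Function.Injective (algebraMap k R))
    (hic : ∀ x : R, IsIntegral k x → x ∈ Set.range (algebraMap k R))
    (l : ℕ) (hl : 1 ≤ l)
    (hu : ∃ u : Rˣ, (u : R) ∉ Set.range (algebraMap k R))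
    (hpow : (fun x : R => x ^ l) '' {x : R | x ∉ Set.range (algebraMap k R)} =
      {x : R | x ∉ Set.range (algebraMap k R)}) :
    (∀ u : Rˣ, ∃ v : Rˣ, v ^ l = u) ∧
    (∀ a : k, ∃ b : k, b ^ l = a) ∧
    (∀ x : R, ∃ y : R, y ^ l = x) := by
  obtain ⟨u, hu⟩ := hu
  have hul : (u : R) ^ l ∉ Set.range (algebraMap k R) := hpow.le ⟨u, hu, rfl⟩
  have hroot (x : R) (hx : x ∉ Set.range (algebraMap k R)) : ∃ y : R, y ^ l = x := by
    obtain ⟨y, -, hy⟩ := hpow.ge hx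
    exact ⟨y, hy⟩
  have hk := exists_pow_eq_of_unit_pow_not_mem_range hinj hic hl hul hroot
  have hR := exists_pow_eq_of_forall_not_mem_range hk hroot
  refine ⟨fun w => ?_, hk, hR⟩
  obtain ⟨y, hy⟩ := hR w
  exact Units.exists_pow_eq_of_pow_eq (by omega) hy

theorem powers_surjective_of_unit_outside_base
    (k R : Type*) [Field k] [CommRing R] [IsDomain R] [IsNoetherianRing R]
    [Infinite R] [Algebra k R] [IsIntegrallyClosed R]
    (hinj : Function.Injective (algebraMap k R))
    (hic : ∀ x : R, IsIntegral k x → x ∈ Set.range (algebraMap k R))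
    (horb : ∃ s : Finset R, ∀ x : R, x ∉ Set.range (algebraMap k R) →
      ∃ y ∈ s, ∃ σ : R ≃ₐ[k] R, σ y = x)
    (l : ℕ) (hl : 1 ≤ l)
    (hu : ∃ u : Rˣ, (u : R) ∉ Set.range (algebraMap k R))
    (hpow : (fun x : R => x ^ l) '' {x : R | x ∉ Set.range (algebraMap k R)} =
      {x : R | x ∉ Set.range (algebraMap k R)}) :
    (∀ u : Rˣ, ∃ v : Rˣ, v ^ l = u) ∧
    (∀ a : k, ∃ b : k, b ^ l = a) ∧
    (∀ x : R, ∃ y : R, y ^ l = x) :=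
  powers_surjective_of_unit_outside_base_general k R hinj hic l hl hu hpow
end

section
/- If R is integrally closed, then the fixed subring of Aut_k(R) equals k: k = { λ ∈ R : σ(λ) = λ for all σ ∈ Aut_k(R) }. -/
/-!
Suppose `λ ∉ k` is fixed by `Aut_k(R)`. A fixed element is the only element of its orbit, so the
fixed elements outside `k` all lie in the finite set of orbit representatives; since every
`a • λ` with `a ≠ 0` is one of them, `k` is finite, say of characteristic exponent `p`.
If some `x ∈ R` were not a `p`-th power, then (as `k` is perfect) no `x ^ p ^ i` would lie in `k`,
so two of them share an orbit: `σ (x ^ p ^ i) = x ^ p ^ j` with `i < j`. Injectivity of Frobenius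
gives `σ x = x ^ p ^ (j - i)`, so `x` is a `p`-th power after all. Hence `R` is perfect, the
`#k`-power Frobenius is a `k`-automorphism, and `λ ^ #k = λ` makes `λ` a root of `X ^ #k - X`,
whose roots in the domain `R` are exactly the elements of `k`.
-/

open Polynomial

theorem exists_pow_eq_of_ringEquiv_apply_pow_eq {R : Type*} [CommRing R] [IsReduced R]
    (p : ℕ) [ExpChar R p] (σ : R ≃+* R) {x : R} {i j : ℕ} (hij : i < j)
    (h : σ (x ^ p ^ i) = x ^ p ^ j) : ∃ w, w ^ p = x := by
  obtain ⟨m, rfl⟩ := Nat.exists_eq_add_of_lt hij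
  have hσx : σ x = (x ^ p ^ m) ^ p := by
    apply iterateFrobenius_inj R p i
    simp only [iterateFrobenius_def, ← map_pow, h, ← pow_mul, ← pow_add, ← pow_succ]
    ring_nf
  exact ⟨σ.symm (x ^ p ^ m), by rw [← map_pow, ← hσx, σ.symm_apply_apply]⟩

theorem mem_range_algebraMap_of_pow_card_eq_self {k R : Type*} [Field k] [Fintype k]
    [CommRing R] [IsDomain R] [Algebra k R] {x : R} (hx : x ^ Fintype.card k = x) :
    x ∈ Set.range (algebraMap k R) := by
  have hprod : (Finset.univ.val.map fun a : k => X - C a).prod =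
      (X ^ Fintype.card k - X : k[X]) := by
    rw [← FiniteField.roots_X_pow_card_sub_X]
    refine prod_multiset_X_sub_C_of_monic_of_roots_card_eq ?_ ?_
    · exact monic_X_pow_sub (by simpa using Fintype.one_lt_card)
    · rw [FiniteField.roots_X_pow_card_sub_X,
        FiniteField.X_pow_card_sub_X_natDegree_eq k Fintype.one_lt_card]
      rfl
  have hzero := congrArg (aeval x) hprod
  simp only [map_sub, map_pow, aeval_X, hx, sub_self, map_multiset_prod,
    Multiset.map_map] at hzero
  obtain ⟨a, -, ha⟩ := Multiset.mem_map.mp (Multiset.prod_eq_zero_iff.mp hzero)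
  simp only [Function.comp_apply, map_sub, aeval_X, aeval_C] at ha
  exact ⟨a, (sub_eq_zero.mp ha).symm⟩

section OrbitRepresentatives

variable {k R : Type*}

theorem mem_of_forall_algEquiv_apply_eq [CommSemiring k] [Semiring R] [Algebra k R]
    {s : Finset R}
    (hs : ∀ x ∉ Set.range (algebraMap k R), ∃ y ∈ s, ∃ σ : R ≃ₐ[k] R, σ y = x)
    {x : R} (hfix : ∀ σ : R ≃ₐ[k] R, σ x = x) (hx : x ∉ Set.range (algebraMap k R)) :
    x ∈ s := by
  obtain ⟨y, hy, σ, rfl⟩ := hs x hx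
  rwa [← hfix σ.symm, σ.symm_apply_apply]

theorem exists_lt_algEquiv_apply_eq [CommSemiring k] [Semiring R] [Algebra k R] {s : Finset R}
    (hs : ∀ x ∉ Set.range (algebraMap k R), ∃ y ∈ s, ∃ σ : R ≃ₐ[k] R, σ y = x)
    (u : ℕ → R) (hu : ∀ i, u i ∉ Set.range (algebraMap k R)) :
    ∃ i j, i < j ∧ ∃ σ : R ≃ₐ[k] R, σ (u i) = u j := by
  choose y hy σ hσ using fun i => hs (u i) (hu i)
  obtain ⟨i, j, hne, heq⟩ := Finite.exists_ne_map_eq_of_infinite (fun i => (⟨y i, hy i⟩ : s))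
  have hyij : y i = y j := congrArg Subtype.val heq
  have hmove : ∀ a b, y a = y b → ((σ a).symm.trans (σ b)) (u a) = u b := by
    intro a b hab
    rw [AlgEquiv.trans_apply, ← hσ a, AlgEquiv.symm_apply_apply, hab, hσ b]
  rcases hne.lt_or_gt with h | h
  · exact ⟨i, j, h, _, hmove i j hyij⟩
  · exact ⟨j, i, h, _, hmove j i hyij.symm⟩

theorem finite_of_forall_algEquiv_apply_eq [Field k] [CommRing R] [IsDomain R] [Algebra k R]
    {s : Finset R}
    (hs : ∀ x ∉ Set.range (algebraMap k R), ∃ y ∈ s, ∃ σ : R ≃ₐ[k] R, σ y = x)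
    {x : R} (hfix : ∀ σ : R ≃ₐ[k] R, σ x = x) (hx : x ∉ Set.range (algebraMap k R)) :
    Finite k := by
  have hx0 : x ≠ 0 := fun h => hx ⟨0, by rw [map_zero, h]⟩
  have hmaps : Set.MapsTo (fun a : k => a • x) Set.univ (insert 0 (s : Set R)) := by
    intro a _
    by_cases ha : a = 0
    · simp [ha]
    refine Or.inr (mem_of_forall_algEquiv_apply_eq hs (fun σ => by rw [map_smul, hfix]) ?_)
    rintro ⟨c, hc⟩
    exact hx ⟨a⁻¹ * c, by rw [map_mul, hc, ← Algebra.smul_def, inv_smul_smul₀ ha]⟩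
  exact Set.finite_univ_iff.mp <|
    ((s.finite_toSet.insert 0).subset hmaps.image_subset).of_finite_image
      (smul_left_injective k hx0).injOn

theorem perfectRing_of_finite_orbits [CommSemiring k] [CommRing R] [IsReduced R] [Algebra k R]
    (p : ℕ) [ExpChar R p] [PerfectRing k p] {s : Finset R}
    (hs : ∀ x ∉ Set.range (algebraMap k R), ∃ y ∈ s, ∃ σ : R ≃ₐ[k] R, σ y = x) :
    PerfectRing R p := by
  refine PerfectRing.ofSurjective R p fun x => ?_
  by_contra hx
  have hroot : ¬∃ w, w ^ p = x := hx
  have hu : ∀ i, x ^ p ^ i ∉ Set.range (algebraMap k R) := by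
    rintro i ⟨c, hc⟩
    obtain ⟨d, rfl⟩ := (PerfectRing.bijective_frobenius (R := k) (p := p ^ (i + 1))).2 c
    refine hroot ⟨algebraMap k R d, iterateFrobenius_inj R p i ?_⟩
    rw [iterateFrobenius_def, iterateFrobenius_def, ← hc, map_pow, ← pow_mul, ← pow_succ']
  obtain ⟨i, j, hij, σ, hσ⟩ := exists_lt_algEquiv_apply_eq hs (fun i => x ^ p ^ i) hu
  exact hroot (exists_pow_eq_of_ringEquiv_apply_pow_eq p σ hij hσ)

end OrbitRepresentatives

theorem fixed_subring_eq_base_field_general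
    (k R : Type*) [Field k] [CommRing R] [IsDomain R]
    [Algebra k R]
    (horb : ∃ s : Finset R, ∀ x : R, x ∉ Set.range (algebraMap k R) →
      ∃ y ∈ s, ∃ σ : R ≃ₐ[k] R, σ y = x) :
    Set.range (algebraMap k R) = {lam : R | ∀ σ : R ≃ₐ[k] R, σ lam = lam} := by
  obtain ⟨s, hs⟩ := horb
  refine Set.Subset.antisymm (by rintro _ ⟨c, rfl⟩ σ; exact σ.commutes c) fun lam hlam => ?_
  by_contra hlam_k
  have := finite_of_forall_algEquiv_apply_eq hs hlam hlam_k
  have := Fintype.ofFinite k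
  obtain ⟨p, _⟩ := ExpChar.exists k
  have : ExpChar R p := expChar_of_injective_algebraMap (algebraMap k R).injective p
  have : PerfectRing R p := perfectRing_of_finite_orbits p hs
  exact hlam_k <|
    mem_range_algebraMap_of_pow_card_eq_self (hlam (FiniteField.frobeniusAlgEquiv k R p))

theorem fixed_subring_eq_base_field
    (k R : Type*) [Field k] [CommRing R] [IsDomain R] [IsNoetherianRing R]
    [Infinite R] [Algebra k R] [IsIntegrallyClosed R]
    (hinj : Function.Injective (algebraMap k R))
    (horb : ∃ s : Finset R, ∀ x : R, x ∉ Set.range (algebraMap k R) →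
      ∃ y ∈ s, ∃ σ : R ≃ₐ[k] R, σ y = x) :
    Set.range (algebraMap k R) = {lam : R | ∀ σ : R ≃ₐ[k] R, σ lam = lam} :=
  fixed_subring_eq_base_field_general k R horb
end

section
/- For every λ ∈ R − k, the subgroup S_λ = { a ∈ k^* : σ(λ) = aλ for some σ ∈ Aut_k(R) } has finite index in k^*. -/
/-!
Scalar multiplication by `kˣ` commutes with every `k`-algebra automorphism of `R`, so `kˣ` acts on
the set of `Aut_k(R)`-orbits of `R`, preserving the finitely many orbits of `R − k`. The group
`S_λ` is the stabilizer of the orbit of `λ`, so its index is the size of a finite `kˣ`-orbit.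
-/

namespace MulAction

variable {M G X : Type*} [Group M] [Group G] [MulAction M X] [MulAction G X]

instance orbitRelQuotientMulAction [SMulCommClass M G X] : MulAction M (orbitRel.Quotient G X) where
  smul m := Quotient.map (m • ·) fun _ _ ⟨g, hg⟩ =>
    ⟨g, (smul_comm m g _).symm.trans (congrArg (m • ·) hg)⟩
  one_smul q := Quotient.inductionOn q fun a => congrArg _ (one_smul M a)
  mul_smul m n q := Quotient.inductionOn q fun a => congrArg _ (mul_smul m n a)

theorem orbitRel.Quotient.smul_mk [SMulCommClass M G X] (m : M) (x : X) :
    m • (⟦x⟧ : orbitRel.Quotient G X) = ⟦m • x⟧ :=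
  rfl

theorem mem_stabilizer_orbitRel_mk_iff [SMulCommClass M G X] {m : M} {x : X} :
    m ∈ stabilizer M (⟦x⟧ : orbitRel.Quotient G X) ↔ ∃ g : G, g • x = m • x := by
  rw [mem_stabilizer_iff, orbitRel.Quotient.smul_mk, Quotient.eq]
  rfl

theorem finiteIndex_stabilizer_of_finite_orbit {x : X} (h : (orbit M x).Finite) :
    (stabilizer M x).FiniteIndex :=
  have : Finite (orbit M x) := h
  have : Finite (M ⧸ stabilizer M x) := .of_equiv _ (orbitEquivQuotientStabilizer M x)
  Subgroup.finiteIndex_of_finite_quotient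

end MulAction

theorem Algebra.units_smul_mem_range_algebraMap_iff {k R : Type*} [CommSemiring k] [Semiring R]
    [Algebra k R] (a : kˣ) (x : R) :
    a • x ∈ Set.range (algebraMap k R) ↔ x ∈ Set.range (algebraMap k R) := by
  simpa only [← Algebra.mem_bot, Subalgebra.mem_toSubmodule] using
    Submodule.smul_mem_iff' (Subalgebra.toSubmodule (⊥ : Subalgebra k R)) a

open MulAction in
theorem scaling_subgroup_finite_index_general
    (k R : Type*) [Field k] [CommRing R]
    [Algebra k R]
    (horb : ∃ s : Finset R, ∀ x : R, x ∉ Set.range (algebraMap k R) →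
      ∃ y ∈ s, ∃ σ : R ≃ₐ[k] R, σ y = x)
    (lam : R) (hlam : lam ∉ Set.range (algebraMap k R)) :
    ∃ H : Subgroup kˣ,
      (∀ a : kˣ, a ∈ H ↔ ∃ σ : R ≃ₐ[k] R, σ lam = algebraMap k R (a : k) * lam) ∧
      H.FiniteIndex := by
  refine ⟨stabilizer kˣ (⟦lam⟧ : orbitRel.Quotient (R ≃ₐ[k] R) R), fun a => ?_, ?_⟩
  · rw [mem_stabilizer_orbitRel_mk_iff, Units.smul_def, Algebra.smul_def]
    rfl
  obtain ⟨s, hs⟩ := horb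
  refine finiteIndex_stabilizer_of_finite_orbit <|
    (s.finite_toSet.image (⟦·⟧ : R → orbitRel.Quotient (R ≃ₐ[k] R) R)).subset ?_
  rintro _ ⟨a, rfl⟩
  obtain ⟨y, hy, σ, hσ⟩ := hs (a • lam) <| by
    rwa [Algebra.units_smul_mem_range_algebraMap_iff]
  exact ⟨y, hy, (Quotient.sound (show a • lam ∈ orbit _ y from ⟨σ, hσ⟩)).symm⟩

theorem scaling_subgroup_finite_index
    (k R : Type*) [Field k] [CommRing R] [IsDomain R] [IsNoetherianRing R]
    [Infinite R] [Algebra k R]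
    (hinj : Function.Injective (algebraMap k R))
    (horb : ∃ s : Finset R, ∀ x : R, x ∉ Set.range (algebraMap k R) →
      ∃ y ∈ s, ∃ σ : R ≃ₐ[k] R, σ y = x)
    (lam : R) (hlam : lam ∉ Set.range (algebraMap k R)) :
    ∃ H : Subgroup kˣ,
      (∀ a : kˣ, a ∈ H ↔ ∃ σ : R ≃ₐ[k] R, σ lam = algebraMap k R (a : k) * lam) ∧
      H.FiniteIndex :=
  scaling_subgroup_finite_index_general k R horb lam hlam
end

section
/- If b_1, b_2 ∈ k^* lie in distinct cosets of S_λ, then the orbits O(b_1 λ) and O(b_2 λ) under Aut_k(R) are distinct; hence the number of orbits in R − k is at least the index [k^* : S_λ]. -/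
/-! Since automorphisms are `k`-linear, `σ (b₁ λ) = b₂ λ` forces `σ λ = (b₁⁻¹ b₂) λ`, so `b₁ λ` and
`b₂ λ` share an orbit only when `b₁⁻¹ b₂ ∈ S_λ`. Every `b λ` lies outside `k`, so a finite set
meeting all orbits of `R - k` meets the orbits of the `b λ`, one per coset, in distinct points. -/

open MulAction

theorem Subgroup.index_le_card_of_forall_exists_mem_orbit {G X α : Type*} [Group G]
    [MulAction G X] [Group α] {H : Subgroup α} {g : α → X}
    (hg : ∀ a b, g b ∈ orbit G (g a) → a⁻¹ * b ∈ H) {s : Finset X}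
    (hs : ∀ a, ∃ y ∈ s, g a ∈ orbit G y) : H.index ≤ s.card := by
  choose y hys hy using hs
  let f : α ⧸ H → s := fun q => ⟨y q.out, hys q.out⟩
  have hf : Function.Injective f := by
    intro q₁ q₂ hq
    have hyeq : y q₁.out = y q₂.out := congrArg Subtype.val hq
    have hmem : g q₂.out ∈ orbit G (g q₁.out) := by
      rw [orbit_eq_iff.mpr (hy q₁.out), hyeq]
      exact hy q₂.out
    rw [← q₁.out_eq', ← q₂.out_eq']
    exact QuotientGroup.eq.mpr (hg _ _ hmem)
  calc H.index = Nat.card (α ⧸ H) := rfl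
    _ ≤ Nat.card s := Nat.card_le_card_of_injective f hf
    _ = s.card := Nat.card_eq_finsetCard s

section

variable {k R : Type*} [Field k] [CommRing R] [Algebra k R]

theorem AlgEquiv.apply_eq_algebraMap_mul_of_apply_algebraMap_mul_eq {σ : R ≃ₐ[k] R} {x : R}
    {b₁ b₂ : kˣ} (h : σ (algebraMap k R b₁ * x) = algebraMap k R b₂ * x) :
    σ x = algebraMap k R ↑(b₁⁻¹ * b₂) * x := by
  rw [map_mul, AlgEquiv.commutes] at h
  rw [Units.val_mul, map_mul, mul_assoc, ← h, ← mul_assoc, ← map_mul, Units.inv_mul, map_one,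
    one_mul]

theorem algebraMap_mul_notMem_range_iff {x : R} {b : k} (hb : b ≠ 0) :
    algebraMap k R b * x ∉ Set.range (algebraMap k R) ↔ x ∉ Set.range (algebraMap k R) := by
  have := Submodule.smul_mem_iff (Subalgebra.toSubmodule (⊥ : Subalgebra k R)) hb (x := x)
  simpa [Algebra.smul_def, Algebra.mem_bot] using this.not

end

theorem orbits_distinct_of_distinct_cosets_general
    (k R : Type*) [Field k] [CommRing R] [Algebra k R]
    (lam : R) (hlam : lam ∉ Set.range (algebraMap k R))
    (H : Subgroup kˣ)
    (hH : ∀ a : kˣ, a ∈ H ↔ ∃ σ : R ≃ₐ[k] R, σ lam = algebraMap k R (a : k) * lam) :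
    (∀ b₁ b₂ : kˣ, b₁⁻¹ * b₂ ∉ H →
      (Set.range fun σ : R ≃ₐ[k] R => σ (algebraMap k R (b₁ : k) * lam)) ≠
      (Set.range fun σ : R ≃ₐ[k] R => σ (algebraMap k R (b₂ : k) * lam))) ∧
    (∀ s : Finset R,
      (∀ x : R, x ∉ Set.range (algebraMap k R) → ∃ y ∈ s, ∃ σ : R ≃ₐ[k] R, σ y = x) →
      H.index ≤ s.card) := by
  have key (b₁ b₂ : kˣ)
      (h : algebraMap k R b₂ * lam ∈ orbit (R ≃ₐ[k] R) (algebraMap k R b₁ * lam)) :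
      b₁⁻¹ * b₂ ∈ H :=
    let ⟨σ, hσ⟩ := h
    (hH _).mpr ⟨σ, σ.apply_eq_algebraMap_mul_of_apply_algebraMap_mul_eq hσ⟩
  refine ⟨fun b₁ b₂ hb horbit => hb (key b₁ b₂ ?_), fun s hs => ?_⟩
  · rw [show orbit (R ≃ₐ[k] R) (algebraMap k R b₁ * lam) = _ from horbit]
    exact mem_orbit_self _
  · exact Subgroup.index_le_card_of_forall_exists_mem_orbit key fun b =>
      hs _ ((algebraMap_mul_notMem_range_iff b.ne_zero).mpr hlam)

theorem orbits_distinct_of_distinct_cosets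
    (k R : Type*) [Field k] [CommRing R] [IsDomain R] [Algebra k R]
    (hinj : Function.Injective (algebraMap k R))
    (lam : R) (hlam : lam ∉ Set.range (algebraMap k R))
    (H : Subgroup kˣ)
    (hH : ∀ a : kˣ, a ∈ H ↔ ∃ σ : R ≃ₐ[k] R, σ lam = algebraMap k R (a : k) * lam) :
    (∀ b₁ b₂ : kˣ, b₁⁻¹ * b₂ ∉ H →
      (Set.range fun σ : R ≃ₐ[k] R => σ (algebraMap k R (b₁ : k) * lam)) ≠
      (Set.range fun σ : R ≃ₐ[k] R => σ (algebraMap k R (b₂ : k) * lam))) ∧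
    (∀ s : Finset R,
      (∀ x : R, x ∉ Set.range (algebraMap k R) → ∃ y ∈ s, ∃ σ : R ≃ₐ[k] R, σ y = x) →
      H.index ≤ s.card) :=
  orbits_distinct_of_distinct_cosets_general k R lam hlam H hH
end
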